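/- arXiv:1507.04973 — 5 statements merged into one kernel-verified Lean document; each statement's English description precedes it below -/
import Mathlib

section
/- Let p be a prime not dividing 60, let S be a generating set of G = A₅ × ℤ/pℤ, and let a ∈ S. If the image of S \ {a} under the projection to A₅ generates A₅ and a ∉ ⟨S \ {a}⟩, then ⟨S \ {a}⟩ = A₅ × {0}. -/
/-!
Since `A₅` is perfect and `ℤ/pℤ` is abelian, the commutator subgroup of `H = ⟨S \ {a}⟩` has full
image in `A₅` and trivial image in `ℤ/pℤ`, so `A₅ × {0} ≤ H`. Hence `H = A₅ × K` for the image `K`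
of `H` in the group `ℤ/pℤ` of prime order; `K = ℤ/pℤ` would give `a ∈ H`, so `K` is trivial.
-/

namespace Subgroup

theorem eq_top_prod_map_snd {G N : Type*} [Group G] [Group N] {H : Subgroup (G × N)}
    (hH : (⊤ : Subgroup G).prod ⊥ ≤ H) : H = (⊤ : Subgroup G).prod (H.map (MonoidHom.snd G N)) := by
  rw [top_prod, comap_map_eq, MonoidHom.ker_snd, sup_of_le_left hH]

variable {G A : Type*} [Group G] [CommGroup A]

theorem commutator_le_ker_snd (H : Subgroup (G × A)) : ⁅H, H⁆ ≤ (MonoidHom.snd G A).ker := by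
  rw [← map_eq_bot_iff, map_commutator, commutator_eq_bot_iff_le_centralizer]
  exact fun x _ y _ => mul_comm y x

theorem prod_top_bot_le_commutator (hG : _root_.commutator G = ⊤) {H : Subgroup (G × A)}
    (hH : H.map (MonoidHom.fst G A) = ⊤) : (⊤ : Subgroup G).prod ⊥ ≤ ⁅H, H⁆ := by
  rintro ⟨g, b⟩ hgb
  obtain rfl : b = 1 := (mem_prod.mp hgb).2
  have hg : g ∈ ⁅H, H⁆.map (MonoidHom.fst G A) := by
    rw [map_commutator, hH, ← _root_.commutator_def, hG]; trivial
  obtain ⟨⟨g', b'⟩, hmem, rfl⟩ := hg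
  obtain rfl : b' = 1 := commutator_le_ker_snd H hmem
  exact hmem

end Subgroup

theorem closure_erase_eq_A5_general (p : ℕ) (hp : p.Prime)
    (S : Set (alternatingGroup (Fin 5) × Multiplicative (ZMod p)))
    (a : alternatingGroup (Fin 5) × Multiplicative (ZMod p))
    (hproj : Subgroup.closure (Prod.fst '' (S \ {a})) = (⊤ : Subgroup (alternatingGroup (Fin 5))))
    (hna : a ∉ Subgroup.closure (S \ {a})) :
    Subgroup.closure (S \ {a}) =
      Subgroup.prod (⊤ : Subgroup (alternatingGroup (Fin 5)))
        (⊥ : Subgroup (Multiplicative (ZMod p))) := by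
  set H := Subgroup.closure (S \ {a})
  have hfst : H.map (MonoidHom.fst _ _) = ⊤ := by
    rwa [MonoidHom.map_closure, MonoidHom.coe_fst]
  have hA5 : (⊤ : Subgroup (alternatingGroup (Fin 5))).prod ⊥ ≤ H :=
    (Subgroup.prod_top_bot_le_commutator (commutator_alternatingGroup_eq_top (by simp)) hfst).trans
      H.commutator_le_self
  have : NeZero p := ⟨hp.ne_zero⟩
  have : Fact (Nat.card (Multiplicative (ZMod p))).Prime := ⟨by simpa using hp⟩
  rw [Subgroup.eq_top_prod_map_snd hA5] at hna ⊢
  rcases (H.map (MonoidHom.snd _ _)).eq_bot_or_eq_top_of_prime_card with hbot | htop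
  · rw [hbot]
  · rw [htop, Subgroup.top_prod_top] at hna
    exact absurd (Subgroup.mem_top a) hna

theorem closure_erase_eq_A5 (p : ℕ) (hp : p.Prime) (hp60 : ¬ p ∣ 60)
    (S : Set (alternatingGroup (Fin 5) × Multiplicative (ZMod p)))
    (hS : Subgroup.closure S = ⊤)
    (a : alternatingGroup (Fin 5) × Multiplicative (ZMod p)) (ha : a ∈ S)
    (hproj : Subgroup.closure (Prod.fst '' (S \ {a})) = (⊤ : Subgroup (alternatingGroup (Fin 5))))
    (hna : a ∉ Subgroup.closure (S \ {a})) :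
    Subgroup.closure (S \ {a}) =
      Subgroup.prod (⊤ : Subgroup (alternatingGroup (Fin 5)))
        (⊥ : Subgroup (Multiplicative (ZMod p))) :=
  closure_erase_eq_A5_general p hp S a hproj hna
end

section
/- Every minimal generating set of A₅ has at most 3 elements. (A generating set S is minimal if no proper subset of S generates.) -/
/-!
Along a chain `⟨T₁⟩ < ⟨T₂⟩ < ⋯` of subgroups generated by growing subsets of an irredundant set,
the order of the subgroup gains at least one prime factor at each step, so an irredundant set in a
finite group `G` has at most `Ω |G|` elements; for `A₅` this is `4`.

If `S ⊆ A₅` were irredundant with four elements, every `k`-subset of `S` would generate a subgroup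
whose order has exactly `k` prime factors. A triple generates a subgroup of order `12`, since `A₅`,
being simple of order `60 ∤ 4!`, has no proper subgroup of index at most `4`. A pair inside it
generates a subgroup of order `4` or `6`. Order `6` is impossible: its subgroup of order `3` would
be normalized by the subgroup of order `12`, so the number of Sylow `3`-subgroups of `A₅` would
divide `5` and be `1 mod 3`, making a subgroup of order `3` normal. Hence any two elements of `S`
generate a group of order `4` and commute, and a triple generates an abelian group of order `12`,
which normalizes its subgroup of order `3`: the same contradiction.
-/

open Subgroup ArithmeticFunction
open scoped ArithmeticFunction.Omega Nat

namespace Subgroup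

variable {G : Type*} [Group G]

theorem card_mul_relIndex {H K : Subgroup G} (h : H ≤ K) :
    Nat.card H * H.relIndex K = Nat.card K := by
  rw [← relIndex_bot_left, ← relIndex_bot_left, relIndex_mul_relIndex _ _ _ bot_le h]

theorem cardFactors_card_le_cardFactors_card [Finite G] (H : Subgroup G) :
    Ω (Nat.card H) ≤ Ω (Nat.card G) := by
  rw [← H.card_mul_index, cardFactors_mul Nat.card_pos.ne' index_ne_zero_of_finite]
  exact Nat.le_add_right _ _

theorem cardFactors_card_lt_cardFactors_card [Finite G] {H K : Subgroup G} (h : H < K) :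
    Ω (Nat.card H) < Ω (Nat.card K) := by
  have hmul := card_mul_relIndex h.le
  have hrel : H.relIndex K ≠ 1 := fun h1 => h.not_ge (relIndex_eq_one.mp h1)
  have hrel0 : H.relIndex K ≠ 0 := by
    rintro h0
    rw [h0, mul_zero] at hmul
    exact Nat.card_pos.ne' hmul.symm
  rw [← hmul, cardFactors_mul Nat.card_pos.ne' hrel0]
  have := cardFactors_pos_iff_one_lt.mpr (by omega : 1 < H.relIndex K)
  omega

theorem exists_le_card_eq_prime [Finite G] {p : ℕ} [Fact p.Prime]
    {K : Subgroup G} (h : p ∣ Nat.card K) : ∃ P ≤ K, Nat.card P = p := by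
  obtain ⟨g, hg⟩ := exists_prime_orderOf_dvd_card' (G := K) p h
  exact ⟨zpowers (g : G), zpowers_le.2 g.2, by rw [Nat.card_zpowers, orderOf_coe, hg]⟩

theorem mem_of_relIndex_eq_two_of_odd_orderOf {H K : Subgroup G} (h : H.relIndex K = 2) {g : G}
    (hg : g ∈ K) (hodd : Odd (orderOf g)) : g ∈ H := by
  obtain ⟨m, hm⟩ := hodd
  have hsq : g ^ 2 ∈ H := by
    simpa [mem_subgroupOf] using sq_mem_of_index_two h ⟨g, hg⟩
  have hg : g = (g ^ 2) ^ (m + 1) := by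
    rw [← pow_mul, show 2 * (m + 1) = orderOf g + 1 by omega, pow_succ, pow_orderOf_eq_one,
      one_mul]
  rw [hg]
  exact pow_mem hsq _

theorem le_normalizer_of_relIndex_eq_two {P K T : Subgroup G} (hPK : P ≤ K) (hKT : K ≤ T)
    (hPK2 : P.relIndex K = 2) (hKT2 : K.relIndex T = 2) (hodd : Odd (Nat.card P)) :
    T ≤ normalizer P := by
  have hK : (K.subgroupOf T).Normal := normal_of_index_eq_two hKT2
  rw [le_normalizer_iff]
  intro t ht p hp
  have hconj : t * p * t⁻¹ ∈ K := by
    simpa [mem_subgroupOf] using hK.conj_mem ⟨p, hKT (hPK hp)⟩ (hPK hp) ⟨t, ht⟩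
  refine mem_of_relIndex_eq_two_of_odd_orderOf hPK2 hconj ?_
  rw [← (SemiconjBy.conj_mk t p).orderOf_eq]
  exact hodd.of_dvd_nat (P.orderOf_dvd_natCard hp)

end Subgroup

theorem IsSimpleGroup.card_dvd_factorial_index {G : Type*} [Group G] [Finite G]
    [IsSimpleGroup G] {H : Subgroup G} (hH : H ≠ ⊤) : Nat.card G ∣ H.index ! := by
  have hcore : H.normalCore = ⊥ :=
    (IsSimpleGroup.eq_bot_or_eq_top_of_normal _ H.normalCore_normal).resolve_right
      fun h => hH (top_le_iff.mp (h ▸ H.normalCore_le))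
  rw [← index_bot, ← hcore, normalCore_eq_ker, index_ker, index_eq_card, ← Nat.card_perm]
  exact card_subgroup_dvd_card _

section Irredundant

variable {G : Type*} [Group G]

def IsIrredundant (S : Set G) : Prop :=
  ∀ s ∈ S, s ∉ closure (S \ {s})

variable {S T : Set G}

theorem isIrredundant_of_minimal_closure_eq_top (hgen : closure S = ⊤)
    (hmin : ∀ T ⊂ S, closure T ≠ ⊤) : IsIrredundant S := by
  intro s hs hmem
  refine hmin (S \ {s}) (Set.sdiff_singleton_ssubset.2 hs) (eq_top_iff.2 ?_)
  rw [← hgen, closure_le]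
  intro t ht
  by_cases hts : t = s
  · rwa [hts]
  · exact subset_closure ⟨ht, hts⟩

theorem IsIrredundant.mono (hS : IsIrredundant S) (hTS : T ⊆ S) : IsIrredundant T :=
  fun t ht hmem => hS t (hTS ht) (closure_mono (Set.sdiff_subset_sdiff_left hTS) hmem)

theorem IsIrredundant.closure_lt_closure (hS : IsIrredundant S) (hTS : T ⊂ S) :
    closure T < closure S := by
  obtain ⟨s, hsS, hsT⟩ := Set.exists_of_ssubset hTS
  refine lt_of_le_of_ne (closure_mono hTS.subset) fun h => hS s hsS ?_
  exact closure_mono (Set.subset_sdiff_singleton hTS.subset hsT) (h ▸ subset_closure hsS)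

theorem IsIrredundant.cardFactors_card_closure_add_ncard_le [Finite G] (hS : IsIrredundant S)
    (hTS : T ⊆ S) : Ω (Nat.card (closure T)) + (S \ T).ncard ≤ Ω (Nat.card (closure S)) := by
  induction hn : (S \ T).ncard generalizing T with
  | zero =>
    rw [Set.ncard_eq_zero, Set.sdiff_eq_empty] at hn
    rw [hn.antisymm hTS, add_zero]
  | succ n ih =>
    obtain ⟨s, hsS, hsT⟩ : (S \ T).Nonempty := Set.nonempty_of_ncard_ne_zero (by omega)
    have hsTS : insert s T ⊆ S := Set.insert_subset hsS hTS
    have hstep := cardFactors_card_lt_cardFactors_card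
      ((hS.mono hsTS).closure_lt_closure (Set.ssubset_insert hsT))
    have := ih hsTS (by
      rw [← Set.union_singleton, ← Set.sdiff_sdiff,
        Set.ncard_sdiff_singleton_of_mem (show s ∈ S \ T from ⟨hsS, hsT⟩), hn, Nat.add_sub_cancel])
    omega

theorem IsIrredundant.ncard_le_cardFactors_card_closure [Finite G] (hS : IsIrredundant S) :
    S.ncard ≤ Ω (Nat.card (closure S)) := by
  have h := hS.cardFactors_card_closure_add_ncard_le (Set.empty_subset S)
  rwa [Subgroup.closure_empty, card_bot, cardFactors_one, Set.sdiff_empty, zero_add] at h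

theorem IsIrredundant.ncard_le_cardFactors_card [Finite G] (hS : IsIrredundant S) :
    S.ncard ≤ Ω (Nat.card G) :=
  hS.ncard_le_cardFactors_card_closure.trans (closure S).cardFactors_card_le_cardFactors_card

end Irredundant

theorem eq_of_dvd_sixty_of_cardFactors_eq_three {n : ℕ} (hn : n ∣ 60) (hΩ : Ω n = 3) :
    n = 12 ∨ n = 15 ∨ n = 20 ∨ n = 30 := by
  have : n ∈ Nat.divisors 60 := Nat.mem_divisors.2 ⟨hn, by norm_num⟩
  rw [show Nat.divisors 60 = {1, 2, 3, 4, 5, 6, 10, 12, 15, 20, 30, 60} by decide] at this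
  simp only [Finset.mem_insert, Finset.mem_singleton] at this
  rcases this with rfl | rfl | rfl | rfl | rfl | rfl | rfl | rfl | rfl | rfl | rfl | rfl <;>
    simp_all [cardFactors_apply]

theorem eq_of_dvd_twelve_of_cardFactors_eq_two {n : ℕ} (hn : n ∣ 12) (hΩ : Ω n = 2) :
    n = 4 ∨ n = 6 := by
  have : n ∈ Nat.divisors 12 := Nat.mem_divisors.2 ⟨hn, by norm_num⟩
  rw [show Nat.divisors 12 = {1, 2, 3, 4, 6, 12} by decide] at this
  simp only [Finset.mem_insert, Finset.mem_singleton] at this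
  rcases this with rfl | rfl | rfl | rfl | rfl | rfl <;> simp_all [cardFactors_apply]

local notation "A₅" => alternatingGroup (Fin 5)

namespace alternatingGroup

theorem nat_card_five : Nat.card A₅ = 60 := by
  rw [nat_card_alternatingGroup, Nat.card_fin]
  rfl

theorem cardFactors_nat_card_five : Ω (Nat.card A₅) = 4 := by
  rw [nat_card_five]
  simp [cardFactors_apply]

theorem five_le_index_of_ne_top {H : Subgroup A₅} (hH : H ≠ ⊤) : 5 ≤ H.index := by
  have h60 := Nat.le_of_dvd (Nat.factorial_pos _) (IsSimpleGroup.card_dvd_factorial_index hH)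
  by_contra! h
  have h24 : H.index ! ≤ 24 := Nat.factorial_le (Nat.le_of_lt_succ h)
  rw [nat_card_five] at h60
  omega

theorem card_eq_twelve_of_cardFactors_eq_three {H : Subgroup A₅} (hH : Ω (Nat.card H) = 3) :
    Nat.card H = 12 := by
  have hmul := H.card_mul_index
  have hdvd : Nat.card H ∣ 60 := nat_card_five ▸ H.card_subgroup_dvd_card
  have hidx := five_le_index_of_ne_top (H := H) fun h => by
    rw [h, card_top, cardFactors_nat_card_five] at hH
    omega
  rw [nat_card_five] at hmul
  rcases eq_of_dvd_sixty_of_cardFactors_eq_three hdvd hH with h | h | h | h <;>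
    rw [h] at hmul ⊢ <;> omega

theorem not_le_normalizer_of_card_eq_twelve {P T : Subgroup A₅} (hP : Nat.card P = 3)
    (hT : Nat.card T = 12) : ¬ T ≤ normalizer (P : Set A₅) := by
  intro hTP
  have hPmul := P.card_mul_index
  have hTmul := T.card_mul_index
  rw [hP, nat_card_five] at hPmul
  rw [hT, nat_card_five] at hTmul
  let P' : Sylow 3 A₅ :=
    (IsPGroup.of_card (n := 1) (by rw [hP, pow_one])).toSylow (by omega)
  have hcount : Nat.card (Sylow 3 A₅) = (normalizer (P : Set A₅)).index :=
    P'.card_eq_index_normalizer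
  have hdvd : Nat.card (Sylow 3 A₅) ∣ 5 := by
    have hTidx : T.index = 5 := by omega
    rw [hcount]
    exact (index_dvd_of_le hTP).trans (dvd_of_eq hTidx)
  have hone : (normalizer (P : Set A₅)).index = 1 := by
    rcases (Nat.dvd_prime (by norm_num)).1 hdvd with h | h
    · rwa [hcount] at h
    · have := card_sylow_modEq_one 3 A₅
      rw [h] at this
      exact absurd this (by decide)
  rw [Subgroup.index_eq_one, normalizer_eq_top_iff] at hone
  rcases IsSimpleGroup.eq_bot_or_eq_top_of_normal P hone with h | h
  · rw [h, card_bot] at hP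
    omega
  · rw [h, card_top, nat_card_five] at hP
    omega

theorem card_ne_six_of_le_of_card_eq_twelve {K T : Subgroup A₅} (hKT : K ≤ T)
    (hT : Nat.card T = 12) : Nat.card K ≠ 6 := by
  intro hK
  obtain ⟨P, hPK, hP⟩ := exists_le_card_eq_prime (p := 3) (K := K) (by rw [hK]; norm_num)
  have hPK2 : P.relIndex K = 2 := by
    have := card_mul_relIndex hPK
    rw [hP, hK] at this
    omega
  have hKT2 : K.relIndex T = 2 := by
    have := card_mul_relIndex hKT
    rw [hK, hT] at this
    omega
  exact not_le_normalizer_of_card_eq_twelve hP hT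
    (le_normalizer_of_relIndex_eq_two hPK hKT hPK2 hKT2 (by rw [hP]; decide))

theorem not_isMulCommutative_of_card_eq_twelve {T : Subgroup A₅} (hT : Nat.card T = 12) :
    ¬ IsMulCommutative T := by
  intro hcomm
  obtain ⟨P, hPT, hP⟩ := exists_le_card_eq_prime (p := 3) (K := T) (by rw [hT]; norm_num)
  exact not_le_normalizer_of_card_eq_twelve hP hT <|
    calc T ≤ centralizer T := le_centralizer T
      _ ≤ centralizer P := centralizer_le hPT
      _ ≤ normalizer P := centralizer_le_normalizer _

section Irredundant

variable {S T : Set A₅}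

theorem cardFactors_card_closure_eq_ncard (hS : IsIrredundant S) (hS4 : S.ncard = 4)
    (hTS : T ⊆ S) : Ω (Nat.card (closure T)) = T.ncard := by
  have hlow := (hS.mono hTS).ncard_le_cardFactors_card_closure
  have hup := hS.cardFactors_card_closure_add_ncard_le hTS
  have htop := (closure S).cardFactors_card_le_cardFactors_card
  rw [cardFactors_nat_card_five] at htop
  rw [Set.ncard_sdiff hTS] at hup
  have := Set.ncard_le_ncard hTS
  omega

theorem card_closure_eq_twelve (hS : IsIrredundant S) (hS4 : S.ncard = 4) (hTS : T ⊆ S)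
    (hT3 : T.ncard = 3) : Nat.card (closure T) = 12 :=
  card_eq_twelve_of_cardFactors_eq_three (hT3 ▸ cardFactors_card_closure_eq_ncard hS hS4 hTS)

theorem commute_of_isIrredundant (hS : IsIrredundant S) (hS4 : S.ncard = 4) {a b : A₅}
    (ha : a ∈ S) (hb : b ∈ S) : Commute a b := by
  obtain rfl | hab := eq_or_ne a b
  · exact Commute.refl a
  have hpair : {a, b} ⊆ S := Set.insert_subset ha (Set.singleton_subset_iff.2 hb)
  obtain ⟨T, hpairT, hTS, hT3⟩ := Set.exists_subsuperset_card_eq hpair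
    (by rw [Set.ncard_pair hab]; omega) (by omega : 3 ≤ S.ncard)
  have hT := card_closure_eq_twelve hS hS4 hTS hT3
  have hle := closure_mono hpairT
  have hΩ := cardFactors_card_closure_eq_ncard hS hS4 hpair
  rw [Set.ncard_pair hab] at hΩ
  rcases eq_of_dvd_twelve_of_cardFactors_eq_two (hT ▸ card_dvd_of_le hle) hΩ with h4 | h6
  · have := IsPGroup.isMulCommutative_of_card_eq_prime_sq (p := 2) (h4.trans (by norm_num))
    exact le_centralizer (closure {a, b}) (subset_closure (by simp)) a (subset_closure (by simp))
  · exact absurd h6 (card_ne_six_of_le_of_card_eq_twelve hle hT)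

theorem ncard_ne_four_of_isIrredundant (hS : IsIrredundant S) : S.ncard ≠ 4 := by
  intro hS4
  obtain ⟨T, hTS, hT3⟩ := Set.exists_subset_card_eq (show 3 ≤ S.ncard by omega)
  exact not_isMulCommutative_of_card_eq_twelve (card_closure_eq_twelve hS hS4 hTS hT3)
    (isMulCommutative_closure fun x hx y hy => commute_of_isIrredundant hS hS4 (hTS hx) (hTS hy))

end Irredundant

end alternatingGroup

theorem minimal_generating_set_A5_card_le_three
    (S : Set (alternatingGroup (Fin 5)))
    (hgen : Subgroup.closure S = ⊤)
    (hmin : ∀ T : Set (alternatingGroup (Fin 5)), T ⊂ S → Subgroup.closure T ≠ ⊤) :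
    S.Finite ∧ S.ncard ≤ 3 := by
  have hS := isIrredundant_of_minimal_closure_eq_top hgen hmin
  have hle := hS.ncard_le_cardFactors_card
  rw [alternatingGroup.cardFactors_nat_card_five] at hle
  have hne := alternatingGroup.ncard_ne_four_of_isIrredundant hS
  exact ⟨S.toFinite, by omega⟩
end

section
/- If a and b are two elements of order 3 in A₅ that generate a proper subgroup H of A₅ with a ∉ ⟨b⟩, then H is conjugate in S₅ to A₄ (in particular |H| = 12). -/
open Equiv Equiv.Perm Subgroup

private lemma order3_isThreeCycle {f : Equiv.Perm (Fin 5)} (hf : orderOf f = 3) :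
    f.IsThreeCycle := by
  have hne : f ≠ 1 := by rintro rfl; simp at hf
  have hmem : ∀ n ∈ f.cycleType, n = 3 := by
    intro n hn
    have h2 := Equiv.Perm.two_le_of_mem_cycleType hn
    have h3 : n ∣ 3 := hf ▸ (f.lcm_cycleType ▸ Multiset.dvd_lcm hn)
    rcases (Nat.prime_three.eq_one_or_self_of_dvd n h3) with h | h <;> omega
  have hrep : f.cycleType = Multiset.replicate (Multiset.card f.cycleType) 3 :=
    Multiset.eq_replicate_card.mpr hmem
  have hsum : f.cycleType.sum = f.support.card := f.sum_cycleType
  have hle : f.support.card ≤ 5 := (Finset.card_le_univ _).trans_eq (by simp)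
  have hpos : Multiset.card f.cycleType ≠ 0 := by
    simpa [Multiset.card_eq_zero, Equiv.Perm.cycleType_eq_zero] using hne
  have hsum' : f.cycleType.sum = Multiset.card f.cycleType * 3 := by
    rw [hrep, Multiset.sum_replicate, smul_eq_mul]; ring_nf
    simp [Multiset.card_replicate]
  have hcard1 : Multiset.card f.cycleType = 1 := by omega
  show f.cycleType = {3}
  rw [hrep, hcard1]; rfl

private lemma normal_of_index_two' {G : Type*} [Group G] {H : Subgroup G} (h : H.index = 2) :
    H.Normal := by
  constructor
  intro n hn g
  have h1 := Subgroup.mul_mem_iff_of_index_two h (a := g * n) (b := g⁻¹)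
  have h2 := Subgroup.mul_mem_iff_of_index_two h (a := g) (b := n)
  rw [mul_assoc] at h1 ⊢
  simp only [hn, H.inv_mem_iff, iff_true] at h1 h2
  tauto

private lemma fac3 {n : ℕ} (h0 : n ≠ 0) (h3 : 3 ∣ n) (h9 : ¬ 9 ∣ n) :
    n.factorization 3 = 1 := by
  have h1 : 1 ≤ n.factorization 3 :=
    (Nat.Prime.pow_dvd_iff_le_factorization Nat.prime_three h0).mp (by simpa using h3)
  have h2 : ¬ 2 ≤ n.factorization 3 := fun h =>
    h9 (by simpa using (Nat.Prime.pow_dvd_iff_le_factorization Nat.prime_three h0).mpr h)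
  omega

private lemma sylow3_unique {K : Type*} [Group K] [Finite K]
    (hcard : Nat.card K = 3 ∨ Nat.card K = 6 ∨ Nat.card K = 15)
    (P Q : Subgroup K) (hP : Nat.card P = 3) (hQ : Nat.card Q = 3) : P = Q := by
  have : Fact (Nat.Prime 3) := ⟨by norm_num⟩
  have hfac : (Nat.card K).factorization 3 = 1 := by
    rcases hcard with h | h | h <;> rw [h] <;> exact fac3 (by norm_num) (by norm_num) (by norm_num)
  let P' : Sylow 3 K := Sylow.ofCard P (by rw [hP, hfac, pow_one])
  let Q' : Sylow 3 K := Sylow.ofCard Q (by rw [hQ, hfac, pow_one])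
  have hdvd := P'.card_dvd_index
  have hidx : Nat.card (P' : Subgroup K) * (P' : Subgroup K).index = Nat.card K :=
    Subgroup.card_mul_index _
  have hPc : Nat.card (P' : Subgroup K) = 3 := hP
  rw [hPc] at hidx
  have hmod : Nat.card (Sylow 3 K) % 3 = 1 % 3 := card_sylow_modEq_one 3 K
  have hidx' : (P' : Subgroup K).index = 1 ∨ (P' : Subgroup K).index = 2 ∨
      (P' : Subgroup K).index = 5 := by
    rcases hcard with h | h | h <;> rw [h] at hidx <;> omega
  have hone : Nat.card (Sylow 3 K) = 1 := by
    have h1 : Nat.card (Sylow 3 K) ≤ 5 := by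
      rcases hidx' with h | h | h <;> rw [h] at hdvd <;>
        exact (Nat.le_of_dvd (by norm_num) hdvd).trans (by norm_num)
    have h4 : Nat.card (Sylow 3 K) ≠ 4 := by
      intro hc
      rw [hc] at hdvd
      rcases hidx' with h | h | h <;> rw [h] at hdvd <;> revert hdvd <;> decide
    omega
  have : Subsingleton (Sylow 3 K) := by
    rw [Nat.card_eq_one_iff_unique] at hone
    exact hone.1
  have hPQ : P' = Q' := Subsingleton.elim _ _
  have := congrArg (fun (S : Sylow 3 K) => (S : Subgroup K)) hPQ
  simpa [P', Q'] using this

private lemma card_A5 : Nat.card (alternatingGroup (Fin 5)) = 60 := by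
  have h := two_mul_card_alternatingGroup (α := Fin 5)
  rw [Fintype.card_perm, Fintype.card_fin] at h
  rw [Nat.card_eq_fintype_card]
  have h5 : Nat.factorial 5 = 120 := rfl
  omega

/-- The copy of `A₄` inside `S₅`: even permutations fixing the point `5`
(the last point of `Fin 5`, i.e. `4 : Fin 5`). -/
noncomputable def A4inS5 : Subgroup (Equiv.Perm (Fin 5)) :=
  alternatingGroup (Fin 5) ⊓ MulAction.stabilizer (Equiv.Perm (Fin 5)) (4 : Fin 5)

private lemma card_A4inS5 : Nat.card A4inS5 = 12 := by
  have he : ∀ g : Equiv.Perm (Fin 5), g ∈ A4inS5 ↔ (Equiv.Perm.sign g = 1 ∧ g 4 = 4) := by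
    intro g
    simp [A4inS5, Subgroup.mem_inf, Equiv.Perm.mem_alternatingGroup,
      MulAction.mem_stabilizer_iff, Equiv.Perm.smul_def]
  rw [Nat.card_congr (Equiv.subtypeEquivRight he)]
  rw [Nat.card_eq_fintype_card]
  decide

theorem two_three_elements_proper_subgroup
    (a b : alternatingGroup (Fin 5)) (ha : orderOf a = 3) (hb : orderOf b = 3)
    (hab : a ∉ Subgroup.zpowers b)
    (H : Subgroup (alternatingGroup (Fin 5)))
    (hH : H = Subgroup.closure {a, b}) (hne : H ≠ ⊤) :
    (∃ g : Equiv.Perm (Fin 5),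
      Subgroup.map (MulAut.conj g).toMonoidHom
        (Subgroup.map (alternatingGroup (Fin 5)).subtype H) = A4inS5) ∧
    Nat.card H = 12 := by
  have haH : a ∈ H := hH ▸ Subgroup.subset_closure (by simp)
  have hbH : b ∈ H := hH ▸ Subgroup.subset_closure (by simp)
  -- Step 1: the cardinality of H is 12
  have hdvd : Nat.card H ∣ 60 := card_A5 ▸ Subgroup.card_subgroup_dvd_card H
  have ha' : orderOf (⟨a, haH⟩ : H) = 3 := by rw [Subgroup.orderOf_mk]; exact ha
  have hb' : orderOf (⟨b, hbH⟩ : H) = 3 := by rw [Subgroup.orderOf_mk]; exact hb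
  have h3 : 3 ∣ Nat.card H := ha' ▸ orderOf_dvd_natCard (⟨a, haH⟩ : H)
  have hpos : 0 < Nat.card H := Nat.card_pos
  have hle : Nat.card H ≤ 60 := Nat.le_of_dvd (by norm_num) hdvd
  have hcases : Nat.card H = 3 ∨ Nat.card H = 6 ∨ Nat.card H = 12 ∨
      Nat.card H = 15 ∨ Nat.card H = 30 ∨ Nat.card H = 60 := by
    interval_cases h : (Nat.card H) <;> omega
  have h60 : Nat.card H ≠ 60 := by
    intro h
    exact hne (Subgroup.eq_top_of_card_eq H (h.trans card_A5.symm))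
  have h30 : Nat.card H ≠ 30 := by
    intro h
    have hidx := Subgroup.card_mul_index H
    rw [h, card_A5] at hidx
    have : H.Normal := normal_of_index_two' (by omega)
    rcases (inferInstance : IsSimpleGroup (alternatingGroup (Fin 5))).eq_bot_or_eq_top_of_normal
      H this with h' | h'
    · rw [h'] at h; simp at h
    · exact hne h'
  have hsyl : Nat.card H ≠ 3 ∧ Nat.card H ≠ 6 ∧ Nat.card H ≠ 15 := by
    refine ⟨?_, ?_, ?_⟩ <;> intro h <;>
    · have key : Subgroup.zpowers (⟨a, haH⟩ : H) = Subgroup.zpowers (⟨b, hbH⟩ : H) := by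
        apply sylow3_unique (by omega)
        · rw [Nat.card_zpowers, ha']
        · rw [Nat.card_zpowers, hb']
      apply hab
      have hmem : (⟨a, haH⟩ : H) ∈ Subgroup.zpowers (⟨b, hbH⟩ : H) :=
        key ▸ Subgroup.mem_zpowers _
      have : a ∈ (Subgroup.zpowers (⟨b, hbH⟩ : H)).map H.subtype :=
        ⟨_, hmem, rfl⟩
      rw [MonoidHom.map_zpowers] at this
      simpa using this
  have hcard12 : Nat.card H = 12 := by omega
  refine ⟨?_, hcard12⟩
  -- Step 2: H is conjugate to A₄ in S₅
  set K := Subgroup.map (alternatingGroup (Fin 5)).subtype H with hK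
  have hKcard : Nat.card K = 12 := by
    rw [← hcard12]
    exact (Nat.card_congr (H.equivMapOfInjective _ (Subgroup.subtype_injective _))).symm
  have haK : ((a : Equiv.Perm (Fin 5))) ∈ K := ⟨a, haH, rfl⟩
  have hbK : ((b : Equiv.Perm (Fin 5))) ∈ K := ⟨b, hbH, rfl⟩
  have ha3 : orderOf ((a : Equiv.Perm (Fin 5))) = 3 := by
    rw [Subgroup.orderOf_coe]; exact ha
  have hb3 : orderOf ((b : Equiv.Perm (Fin 5))) = 3 := by
    rw [Subgroup.orderOf_coe]; exact hb
  have haC := order3_isThreeCycle ha3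
  have hbC := order3_isThreeCycle hb3
  -- a and b have a common fixed point
  have hfix : ∃ x : Fin 5, (a : Equiv.Perm (Fin 5)) x = x ∧ (b : Equiv.Perm (Fin 5)) x = x := by
    by_contra hcon
    push_neg at hcon
    have hsa : (↑a : Equiv.Perm (Fin 5)).support.card = 3 := haC.card_support
    have hsb : (↑b : Equiv.Perm (Fin 5)).support.card = 3 := hbC.card_support
    have hint : ((↑a : Equiv.Perm (Fin 5)).support ∩
        (↑b : Equiv.Perm (Fin 5)).support).Nonempty := by
      rw [← Finset.card_pos]
      have h1 := Finset.card_inter_add_card_union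
        (↑a : Equiv.Perm (Fin 5)).support (↑b : Equiv.Perm (Fin 5)).support
      have h2 : ((↑a : Equiv.Perm (Fin 5)).support ∪
          (↑b : Equiv.Perm (Fin 5)).support).card ≤ 5 :=
        le_trans (Finset.card_le_univ _) (by simp)
      omega
    obtain ⟨x₀, hx₀⟩ := hint
    have hx₀a : (↑a : Equiv.Perm (Fin 5)) x₀ ≠ x₀ :=
      Equiv.Perm.mem_support.mp (Finset.mem_of_mem_inter_left hx₀)
    have hx₀b : (↑b : Equiv.Perm (Fin 5)) x₀ ≠ x₀ :=
      Equiv.Perm.mem_support.mp (Finset.mem_of_mem_inter_right hx₀)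
    have horb : MulAction.orbit K x₀ = Set.univ := by
      apply Set.eq_univ_of_forall
      intro y
      by_cases hy : (↑a : Equiv.Perm (Fin 5)) y = y
      · have hyb : (↑b : Equiv.Perm (Fin 5)) y ≠ y := hcon y hy
        obtain ⟨i, hi⟩ := hbC.isCycle.exists_pow_eq hx₀b hyb
        exact ⟨⟨(↑b : Equiv.Perm (Fin 5)) ^ i, pow_mem hbK i⟩, hi⟩
      · obtain ⟨i, hi⟩ := haC.isCycle.exists_pow_eq hx₀a hy
        exact ⟨⟨(↑a : Equiv.Perm (Fin 5)) ^ i, pow_mem haK i⟩, hi⟩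
    have hidx := MulAction.index_stabilizer K x₀
    rw [horb, Set.ncard_univ] at hidx
    have h5 : Nat.card (Fin 5) = 5 := by simp
    have hdvd5 := (MulAction.stabilizer K x₀).index_dvd_card
    rw [hidx, h5, hKcard] at hdvd5
    omega
  obtain ⟨x, hxa, hxb⟩ := hfix
  have hKle : K ≤ alternatingGroup (Fin 5) ⊓ MulAction.stabilizer (Equiv.Perm (Fin 5)) x := by
    rw [hK, hH, MonoidHom.map_closure]
    apply Subgroup.closure_le _ |>.mpr
    rintro g hg
    simp only [Set.image_insert_eq, Set.image_singleton, Set.mem_insert_iff,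
      Set.mem_singleton_iff] at hg
    rcases hg with rfl | rfl
    · exact ⟨a.2, hxa⟩
    · exact ⟨b.2, hxb⟩
  refine ⟨Equiv.swap x 4, ?_⟩
  have hle' : Subgroup.map (MulAut.conj (Equiv.swap x 4)).toMonoidHom K ≤ A4inS5 := by
    rintro g ⟨k, hk, rfl⟩
    obtain ⟨hk1, hk2⟩ := Subgroup.mem_inf.mp (hKle hk)
    have hg : (MulAut.conj (Equiv.swap x 4)).toMonoidHom k
        = Equiv.swap x 4 * k * (Equiv.swap x 4)⁻¹ := rfl
    unfold A4inS5
    rw [Subgroup.mem_inf, hg]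
    constructor
    · rw [Equiv.Perm.mem_alternatingGroup] at hk1 ⊢
      simp [Equiv.Perm.sign_mul, hk1, mul_comm]
      split_ifs <;> rfl
    · rw [MulAction.mem_stabilizer_iff] at hk2 ⊢
      simp only [Equiv.Perm.smul_def, Equiv.Perm.mul_apply] at hk2 ⊢
      rw [Equiv.swap_inv, Equiv.swap_apply_right, hk2, Equiv.swap_apply_left]
  have hcardmap : Nat.card (Subgroup.map (MulAut.conj (Equiv.swap x 4)).toMonoidHom K) = 12 := by
    rw [← hKcard]
    exact (Nat.card_congr (K.equivMapOfInjective _ (MulEquiv.injective _)).toEquiv).symm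
  exact Subgroup.eq_of_le_of_card_ge hle' (by rw [hcardmap, card_A4inS5])
end

section
/- Factor Group Lemma: Let N be a cyclic normal subgroup of a finite group G, let S ⊆ G, and let (s₁, …, s_m) be a sequence of elements of S ∪ S⁻¹ whose partial products e, s₁, s₁s₂, …, s₁⋯s_{m-1} form a complete set of coset representatives of N in G (each coset exactly once) and such that the product π = s₁s₂⋯s_m generates N. Then the partial products of the sequence (s₁,…,s_m) repeated |N| times visit every element of G exactly once and return to the identity; i.e., the concatenation is a hamiltonian cycle in the Cayley graph Cay(G; S). -/
/-- **Factor Group Lemma.** -/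
theorem factor_group_lemma {G : Type*} [Group G] [Fintype G]
    (N : Subgroup G) [N.Normal] (hcyc : IsCyclic N)
    (S : Set G) (m : ℕ) (hm : 0 < m) (s : ℕ → G)
    (hsS : ∀ i < m, s i ∈ S ∪ S⁻¹)
    (hreps : Function.Bijective
      (fun i : Fin m => (QuotientGroup.mk (((List.range i.val).map s).prod) : G ⧸ N)))
    (hgen : Subgroup.zpowers (((List.range m).map s).prod) = N) :
    Function.Bijective
      (fun k : Fin (m * Nat.card N) =>
        ((List.range k.val).map (fun i => s (i % m))).prod) ∧
    ((List.range (m * Nat.card N)).map (fun i => s (i % m))).prod = 1 := by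
  set n := Nat.card N with hn
  set π : G := ((List.range m).map s).prod with hπ
  set f : ℕ → G := fun i => s (i % m) with hf
  have hA : ∀ k, ((List.range (m + k)).map f).prod
      = π * ((List.range k).map f).prod := by
    intro k
    rw [List.range_add, List.map_append, List.prod_append]
    congr 1
    · rw [hπ]
      refine congrArg _ (List.map_congr_left fun i hi => ?_)
      simp [hf, Nat.mod_eq_of_lt (List.mem_range.mp hi)]
    · rw [List.map_map]
      refine congrArg _ (List.map_congr_left fun i hi => ?_)
      simp [hf, Nat.add_mod_left]
  have hB : ∀ q r, ((List.range (q * m + r)).map f).prod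
      = π ^ q * ((List.range r).map f).prod := by
    intro q
    induction q with
    | zero => simp
    | succ q ih =>
      intro r
      have h : (q + 1) * m + r = m + (q * m + r) := by ring
      rw [h, hA, ih, pow_succ', mul_assoc]
  have hC : ∀ r < m, ((List.range r).map f).prod = ((List.range r).map s).prod := by
    intro r hr
    refine congrArg _ (List.map_congr_left fun i hi => ?_)
    have : i < m := lt_of_lt_of_le (List.mem_range.mp hi) hr.le
    simp [hf, Nat.mod_eq_of_lt this]
  have hπN : π ∈ N := hgen ▸ Subgroup.mem_zpowers π
  have hord : orderOf π = n := by
    rw [← Nat.card_zpowers, hgen]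
  have hmkpow : ∀ (q : ℕ) (x : G),
      (QuotientGroup.mk (π ^ q * x) : G ⧸ N) = QuotientGroup.mk x := by
    intro q x
    have h1 : (QuotientGroup.mk (π ^ q) : G ⧸ N) = 1 :=
      (QuotientGroup.eq_one_iff _).mpr (pow_mem hπN q)
    rw [QuotientGroup.mk_mul, h1, one_mul]
  have hinj : Function.Injective
      (fun k : Fin (m * n) => ((List.range k.val).map f).prod) := by
    intro k1 k2 hk
    simp only at hk
    have hd1 : m * (k1.val / m) + k1.val % m = k1.val := Nat.div_add_mod _ _
    have hd2 : m * (k2.val / m) + k2.val % m = k2.val := Nat.div_add_mod _ _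
    have hr1 : k1.val % m < m := Nat.mod_lt _ hm
    have hr2 : k2.val % m < m := Nat.mod_lt _ hm
    have hq1 : k1.val / m < n := Nat.div_lt_of_lt_mul k1.isLt
    have hq2 : k2.val / m < n := Nat.div_lt_of_lt_mul k2.isLt
    have hd1' : k1.val / m * m + k1.val % m = k1.val := by rw [Nat.mul_comm]; exact hd1
    have hd2' : k2.val / m * m + k2.val % m = k2.val := by rw [Nat.mul_comm]; exact hd2
    rw [← hd1', ← hd2', hB, hC _ hr1, hB, hC _ hr2] at hk
    have hq : (QuotientGroup.mk (((List.range (k1.val % m)).map s).prod) : G ⧸ N)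
        = QuotientGroup.mk (((List.range (k2.val % m)).map s).prod) := by
      rw [← hmkpow (k1.val / m), hk, hmkpow]
    have hreq : k1.val % m = k2.val % m := by
      have h := hreps.injective (a₁ := ⟨k1.val % m, hr1⟩) (a₂ := ⟨k2.val % m, hr2⟩)
        (by simpa using hq)
      exact congrArg Fin.val h
    rw [hreq] at hk
    have hpow : π ^ (k1.val / m) = π ^ (k2.val / m) := mul_right_cancel hk
    have hqeq : k1.val / m = k2.val / m := by
      refine pow_injOn_Iio_orderOf ?_ ?_ hpow
      · simpa [hord] using hq1
      · simpa [hord] using hq2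
    ext
    rw [← hd1', ← hd2', hreq, hqeq]
  have hcardG : Fintype.card G = m * n := by
    have h1 : Nat.card G = Nat.card (G ⧸ N) * Nat.card N :=
      Subgroup.card_eq_card_quotient_mul_card_subgroup N
    have h2 : Nat.card (G ⧸ N) = m := by
      rw [← Nat.card_eq_of_bijective _ hreps, Nat.card_eq_fintype_card, Fintype.card_fin]
    rw [← Nat.card_eq_fintype_card, h1, h2, hn]
  constructor
  · rw [Fintype.bijective_iff_injective_and_card]
    exact ⟨hinj, by rw [Fintype.card_fin, hcardG]⟩
  · have : m * n = n * m + 0 := by ring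
    rw [this, hB, ← hord]
    simp [pow_orderOf_eq_one]
end

section
/- Let p be a prime with p ≡ 1 (mod 30) and G = A₅ × ℤ/pℤ. Suppose (s₁,…,s₆₀) is a sequence of elements of A₅ × {0} ⊆ G whose partial products e, s₁, s₁s₂, …, s₁⋯s₅₉ enumerate all 60 elements of A₅ × {0} (with s₁⋯s₆₀ = e), and let a ∈ G be an element with nontrivial ℤ/pℤ-component such that a^(p-1) ∈ {1} × ℤ/pℤ. Then the walk in Cay(G; {s₁,…,s₆₀, a}) given by the sequence (s₁, a^(p-1), s₂, a^(-(p-1)), s₃, a^(p-1), s₄, a^(-(p-1)), …, s₅₉, a^(p-1), s₆₀, a^(-(p-1))) — i.e., (s_{2i-1}, a repeated p−1 times, s_{2i}, a⁻¹ repeated p−1 times) for i = 1,…,30 — is a hamiltonian cycle in Cay(G; S) where S = {s₁,…,s₆₀} ∪ {a}. -/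
/-!
Every partial product of the lifted walk has the form `P m * a ^ t`, where `P m = s₀ ⋯ s_{m-1}`
and `0 ≤ t < p`: the block `s₂ᵢ, aᵖ⁻¹, s₂ᵢ₊₁, a⁻⁽ᵖ⁻¹⁾` climbs the coset of `P (2i+1)` in
`a`-steps and, because `aᵖ⁻¹` is central, descends the coset of `P (2i+2)`. Reading off the
`ℤ/pℤ`-component recovers `t`, injectivity of `P` on `[0, 60)` then recovers `m mod 60`, and
these two determine the position in the walk. A walk of length `60p = |G|` that visits no
vertex twice is hamiltonian.
-/

section Walk

variable {G : Type*} [Group G] (s : ℕ → G) (a : G)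

def walkBlock (n i : ℕ) : List G :=
  [s (2 * i)] ++ List.replicate (n - 1) a ++ [s (2 * i + 1)] ++ List.replicate (n - 1) a⁻¹

def partialProd (m : ℕ) : G := ((List.range m).map s).prod

variable {s a}

lemma partialProd_zero : partialProd s 0 = 1 := rfl

lemma partialProd_succ (m : ℕ) : partialProd s (m + 1) = partialProd s m * s m := by
  simp [partialProd, List.range_succ]

lemma partialProd_mod {M m : ℕ} (hM : partialProd s M = 1) (hm : m ≤ M) :
    partialProd s (m % M) = partialProd s m := by
  rcases hm.lt_or_eq with hlt | rfl
  · rw [Nat.mod_eq_of_lt hlt]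
  · rw [Nat.mod_self, hM, partialProd_zero]

lemma partialProd_mem {H : Subgroup G} {m : ℕ} (h : ∀ i < m, s i ∈ H) : partialProd s m ∈ H :=
  H.list_prod_mem (by simpa using h)

lemma length_walkBlock {n : ℕ} (hn : 0 < n) (i : ℕ) : (walkBlock s a n i).length = 2 * n := by
  simp [walkBlock]; omega

lemma length_flatMap_walkBlock {n : ℕ} (hn : 0 < n) (N : ℕ) :
    ((List.range N).flatMap (walkBlock s a n)).length = 2 * n * N := by
  simp [List.length_flatMap, length_walkBlock hn, mul_comm]

/-- `(j, t)` encodes the vertex `partialProd s (2 * i + j) * a ^ t` reached after `r` steps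
into the `i`-th block. -/
def blockVertex (n r : ℕ) : ℕ × ℕ :=
  if r = 0 then (0, 0) else if r ≤ n then (1, r - 1) else (2, 2 * n - r)

lemma prod_take_walkBlock {n i r : ℕ} (hc : Commute (a ^ (n - 1)) (s (2 * i + 1)))
    (hr : r ≤ 2 * n) :
    partialProd s (2 * i) * ((walkBlock s a n i).take r).prod
      = partialProd s (2 * i + (blockVertex n r).1) * a ^ (blockVertex n r).2 := by
  unfold blockVertex
  split_ifs with h0 h1
  · simp [h0]
  · obtain ⟨r, rfl⟩ : ∃ r', r = r' + 1 := ⟨r - 1, by omega⟩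
    have hr' : r ≤ n - 1 := by omega
    simp [walkBlock, partialProd_succ, List.take_append, List.take_replicate, mul_assoc, hr',
      Nat.sub_eq_zero_of_le hr']
  · obtain ⟨r, rfl⟩ : ∃ r', r = n + 1 + r' := ⟨r - (n + 1), by omega⟩
    have hlen : ([s (2 * i)] ++ List.replicate (n - 1) a ++ [s (2 * i + 1)]).length = n + 1 := by
      simp; omega
    have hsplit : a ^ (n - 1) = a ^ (2 * n - (n + 1 + r)) * a ^ r := by
      rw [← pow_add]; congr 1; omega
    dsimp only
    rw [walkBlock, ← hlen, List.take_length_add_append, hlen, List.take_replicate,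
      min_eq_left (by omega), partialProd_succ, partialProd_succ]
    simp only [List.prod_append, List.prod_replicate, List.prod_singleton, inv_pow, mul_assoc]
    rw [← mul_assoc (a ^ (n - 1)), hc.eq, hsplit]
    group

lemma prod_walkBlock {n i : ℕ} (hn : 0 < n) (hc : Commute (a ^ (n - 1)) (s (2 * i + 1))) :
    partialProd s (2 * i) * (walkBlock s a n i).prod = partialProd s (2 * (i + 1)) := by
  have hlen : (walkBlock s a n i).take (2 * n) = walkBlock s a n i :=
    List.take_of_length_le (length_walkBlock hn i).le
  have hvertex : blockVertex n (2 * n) = (2, 0) := by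
    simp [blockVertex, hn.ne', hn]
  simpa [hlen, hvertex, mul_add] using prod_take_walkBlock (r := 2 * n) hc le_rfl

lemma prod_flatMap_walkBlock {n : ℕ} (hn : 0 < n) (hc : ∀ i, Commute (a ^ (n - 1)) (s (2 * i + 1)))
    (q : ℕ) : ((List.range q).flatMap (walkBlock s a n)).prod = partialProd s (2 * q) := by
  induction q with
  | zero => rfl
  | succ q ih =>
    rw [List.range_succ, List.flatMap_append, List.prod_append, ih, List.flatMap_singleton,
      prod_walkBlock hn (hc q)]

def walkVertex (n k : ℕ) : ℕ × ℕ :=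
  (2 * (k / (2 * n)) + (blockVertex n (k % (2 * n))).1, (blockVertex n (k % (2 * n))).2)

lemma prod_take_flatMap_walkBlock {n N k : ℕ} (hn : 0 < n)
    (hc : ∀ i, Commute (a ^ (n - 1)) (s (2 * i + 1))) (hk : k < 2 * n * N) :
    (((List.range N).flatMap (walkBlock s a n)).take k).prod
      = partialProd s (walkVertex n k).1 * a ^ (walkVertex n k).2 := by
  set q := k / (2 * n)
  set r := k % (2 * n)
  change _ = partialProd s (2 * q + (blockVertex n r).1) * a ^ (blockVertex n r).2
  have hq : q < N := Nat.div_lt_of_lt_mul hk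
  have hr : r < 2 * n := Nat.mod_lt _ (by omega)
  have hrange : List.range N
      = List.range q ++ q :: (List.range (N - q - 1)).map (fun x => q + 1 + x) := by
    rw [← List.singleton_append, ← List.append_assoc, ← List.range_succ, ← List.range_add]
    congr 1; omega
  have hk' : k = ((List.range q).flatMap (walkBlock s a n)).length + r := by
    rw [length_flatMap_walkBlock hn, mul_comm (2 * n)]; exact (Nat.div_add_mod' k (2 * n)).symm
  rw [hrange, List.flatMap_append, hk', List.take_length_add_append, List.prod_append,
    prod_flatMap_walkBlock hn hc, List.flatMap_cons,
    List.take_append_of_le_length ((length_walkBlock hn q).ge.trans' hr.le),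
    prod_take_walkBlock (hc q) hr.le]

lemma walkVertex_fst_le {n N k : ℕ} (hk : k < 2 * n * N) : (walkVertex n k).1 ≤ 2 * N := by
  have hq : k / (2 * n) < N := Nat.div_lt_of_lt_mul hk
  unfold walkVertex blockVertex
  split_ifs <;> dsimp only <;> omega

lemma walkVertex_snd_lt {n : ℕ} (hn : 0 < n) (k : ℕ) : (walkVertex n k).2 < n := by
  have hr := Nat.mod_lt k (by omega : 0 < 2 * n)
  unfold walkVertex blockVertex
  split_ifs <;> dsimp only <;> omega

lemma eq_of_walkVertex_mod_eq {n N k k' : ℕ} (hk : k < 2 * n * N) (hk' : k' < 2 * n * N)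
    (hfst : (walkVertex n k).1 % (2 * N) = (walkVertex n k').1 % (2 * N))
    (hsnd : (walkVertex n k).2 = (walkVertex n k').2) : k = k' := by
  have hn : 0 < 2 * n := Nat.pos_of_ne_zero fun h => by simp [h] at hk
  have hq : k / (2 * n) < N := Nat.div_lt_of_lt_mul hk
  have hq' : k' / (2 * n) < N := Nat.div_lt_of_lt_mul hk'
  have hr := Nat.mod_lt k hn
  have hr' := Nat.mod_lt k' hn
  have hmod : ∀ m ≤ 2 * N, m % (2 * N) = if m = 2 * N then 0 else m := by
    intro m hm
    split_ifs with h
    · rw [h, Nat.mod_self]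
    · exact Nat.mod_eq_of_lt (by omega)
  rw [← Nat.div_add_mod k (2 * n), ← Nat.div_add_mod k' (2 * n)]
  unfold walkVertex blockVertex at hfst hsnd
  generalize k / (2 * n) = q, k % (2 * n) = r, k' / (2 * n) = q', k' % (2 * n) = r' at *
  suffices q = q' ∧ r = r' by rw [this.1, this.2]
  -- Modulo `2N` only the end of the last block meets its start, with exponent `≥ 1` against `0`.
  split_ifs at hfst hsnd <;> dsimp only at hfst hsnd <;>
    rw [hmod _ (by omega), hmod _ (by omega)] at hfst <;> split_ifs at hfst <;> omega

end Walk

lemma eq_and_eq_of_mul_pow_eq {G K : Type*} [Group G] [Monoid K] (φ : G →* K) {x y a : G}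
    (hx : φ x = 1) (hy : φ y = 1) {t t' : ℕ} (ht : t < orderOf (φ a)) (ht' : t' < orderOf (φ a))
    (h : x * a ^ t = y * a ^ t') : x = y ∧ t = t' := by
  have htt' : t = t' := pow_injOn_Iio_orderOf ht ht' <| by
    simpa [hx, hy] using congrArg φ h
  subst htt'
  exact ⟨mul_right_cancel h, rfl⟩

theorem lifted_hamiltonian_cycle_general (p : ℕ) (hp : p.Prime)
    (s : ℕ → alternatingGroup (Fin 5) × Multiplicative (ZMod p))
    (hs : ∀ i < 60, (s i).2 = 1)
    (hinj : Function.Injective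
      (fun i : Fin 60 => ((List.range i.val).map s).prod))
    (hclosed : ((List.range 60).map s).prod = 1)
    (a : alternatingGroup (Fin 5) × Multiplicative (ZMod p))
    (ha : a.2 ≠ 1) (hap : (a ^ (p - 1)).1 = 1) :
    ((List.range 30).flatMap (fun i =>
        [s (2 * i)] ++ List.replicate (p - 1) a ++
        [s (2 * i + 1)] ++ List.replicate (p - 1) a⁻¹)).length = 60 * p ∧
    Function.Bijective (fun k : Fin (60 * p) =>
      (((List.range 30).flatMap (fun i =>
        [s (2 * i)] ++ List.replicate (p - 1) a ++
        [s (2 * i + 1)] ++ List.replicate (p - 1) a⁻¹)).take k.val).prod) ∧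
    ((List.range 30).flatMap (fun i =>
        [s (2 * i)] ++ List.replicate (p - 1) a ++
        [s (2 * i + 1)] ++ List.replicate (p - 1) a⁻¹)).prod = 1 := by
  have := Fact.mk hp
  have hk (k : Fin (60 * p)) : (k : ℕ) < 2 * p * 30 := by omega
  have hc : ∀ i, Commute (a ^ (p - 1)) (s (2 * i + 1)) :=
    fun i => .prod (hap ▸ .one_left _) (.all _ _)
  have horder : orderOf a.2 = p := orderOf_eq_prime (by
    simpa [Fintype.card_multiplicative, ZMod.card] using pow_card_eq_one (x := a.2)) ha
  have hwalk (k : Fin (60 * p)) :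
      (((List.range 30).flatMap (walkBlock s a p)).take k).prod
        = partialProd s ((walkVertex p k).1 % 60) * a ^ (walkVertex p k).2 := by
    rw [partialProd_mod hclosed (walkVertex_fst_le (hk k)),
      prod_take_flatMap_walkBlock hp.pos hc (hk k)]
  refine ⟨length_flatMap_walkBlock hp.pos 30 |>.trans (by ring),
    (Fintype.bijective_iff_injective_and_card _).2 ⟨fun k k' hkk' => ?_, ?_⟩,
    (prod_flatMap_walkBlock hp.pos hc 30).trans hclosed⟩
  · have hsnd (k : Fin (60 * p)) :
        MonoidHom.snd _ _ (partialProd s ((walkVertex p k).1 % 60)) = 1 :=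
      MonoidHom.mem_ker.1 <| partialProd_mem fun i hi => MonoidHom.mem_ker.2 (hs i (by omega))
    have hexp (k : Fin (60 * p)) : (walkVertex p k).2 < orderOf (MonoidHom.snd _ _ a) :=
      (walkVertex_snd_lt hp.pos k).trans_eq horder.symm
    obtain ⟨hP, ht⟩ := eq_and_eq_of_mul_pow_eq _ (hsnd k) (hsnd k') (hexp k) (hexp k')
      ((hwalk k).symm.trans (hkk'.trans (hwalk k')))
    exact Fin.ext <| eq_of_walkVertex_mod_eq (hk k) (hk k')
      (congrArg Fin.val (hinj (a₁ := ⟨_, Nat.mod_lt _ (by norm_num)⟩)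
        (a₂ := ⟨_, Nat.mod_lt _ (by norm_num)⟩) hP)) ht
  · rw [Fintype.card_fin, Fintype.card_prod, card_alternatingGroup, Fintype.card_multiplicative,
      ZMod.card]
    rfl

/-- Lifting a hamiltonian cycle `(s₁,…,s₆₀)` of `A₅ × {0}` to a hamiltonian cycle
of `A₅ × ℤ/pℤ` as `(s_{2i-1}, a^{p-1}, s_{2i}, a^{-(p-1)})_{i=1}^{30}`. -/
theorem lifted_hamiltonian_cycle (p : ℕ) (hp : p.Prime) (hmod : p % 30 = 1)
    (s : ℕ → alternatingGroup (Fin 5) × Multiplicative (ZMod p))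
    (hs : ∀ i < 60, (s i).2 = 1)
    (hinj : Function.Injective
      (fun i : Fin 60 => ((List.range i.val).map s).prod))
    (hsurj : ∀ g : alternatingGroup (Fin 5) × Multiplicative (ZMod p), g.2 = 1 →
      ∃ i : Fin 60, ((List.range i.val).map s).prod = g)
    (hclosed : ((List.range 60).map s).prod = 1)
    (a : alternatingGroup (Fin 5) × Multiplicative (ZMod p))
    (ha : a.2 ≠ 1) (hap : (a ^ (p - 1)).1 = 1) :
    ((List.range 30).flatMap (fun i =>
        [s (2 * i)] ++ List.replicate (p - 1) a ++
        [s (2 * i + 1)] ++ List.replicate (p - 1) a⁻¹)).length = 60 * p ∧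
    Function.Bijective (fun k : Fin (60 * p) =>
      (((List.range 30).flatMap (fun i =>
        [s (2 * i)] ++ List.replicate (p - 1) a ++
        [s (2 * i + 1)] ++ List.replicate (p - 1) a⁻¹)).take k.val).prod) ∧
    ((List.range 30).flatMap (fun i =>
        [s (2 * i)] ++ List.replicate (p - 1) a ++
        [s (2 * i + 1)] ++ List.replicate (p - 1) a⁻¹)).prod = 1 :=
  lifted_hamiltonian_cycle_general p hp s hs hinj hclosed a ha hap
end
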